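/- Let X = [0,1] with the Euclidean metric and let F = ([0,1/2] × {0}) ∪ ({0} × [0,1/2]) ∪ ([1/2,1] × {1}) ∪ ({1} × [1/2,1]) ⊆ X × X. Then F⁴(x) = X for every x ∈ X, the CR-dynamical system (X,F) has the Hausdorff specification property (HSP), and (X,F) does not have the Hausdorff initial specification property (HISP). -/
import Mathlib


/-- Iterated images of a point under a relation `F ⊆ X × X`:
`relIter F 0 x = {x}` and `relIter F (n+1) x = ⋃ z ∈ relIter F n x, F(z)`. -/
def relIter {X : Type*} (F : Set (X × X)) : ℕ → X → Set X
  | 0, x => {x}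
  | n + 1, x => {y | ∃ z ∈ relIter F n x, (z, y) ∈ F}

/-- The distance between two sets: `inf {dist a b | a ∈ A, b ∈ B}`. -/
noncomputable def setDist {X : Type*} [MetricSpace X] (A B : Set X) : ℝ :=
  sInf (Set.image2 dist A B)

/-- The specification property (`SP`) for a CR-dynamical system `(X, F)`. -/
def CRSpec {X : Type*} [MetricSpace X] (F : Set (X × X)) : Prop :=
  ∀ ε : ℝ, 0 < ε → ∃ N : ℕ, 0 < N ∧
    ∀ (n : ℕ) (x : ℕ → X) (k ℓ : ℕ → ℕ),
      (∀ i, i < n → k i ≤ ℓ i) →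
      (∀ i, i + 1 < n → ℓ i + N ≤ k (i + 1)) →
      ∃ y : X, ∀ i, i < n → ∀ j, k i ≤ j → j ≤ ℓ i →
        setDist (relIter F j y) (relIter F j (x i)) ≤ ε

/-- The Hausdorff specification property (`HSP`) for a CR-dynamical system
`(X, F)`. -/
def CRHSpec {X : Type*} [MetricSpace X] (F : Set (X × X)) : Prop :=
  ∀ ε : ℝ, 0 < ε → ∃ N : ℕ, 0 < N ∧
    ∀ (n : ℕ) (x : ℕ → X) (k ℓ : ℕ → ℕ),
      (∀ i, i < n → k i ≤ ℓ i) →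
      (∀ i, i + 1 < n → ℓ i + N ≤ k (i + 1)) →
      ∃ y : X, ∀ i, i < n → ∀ j, k i ≤ j → j ≤ ℓ i →
        Metric.hausdorffDist (relIter F j y) (relIter F j (x i)) ≤ ε

/-- The initial specification property (`ISP`) for a CR-dynamical system
`(X, F)`. -/
def CRInitSpec {X : Type*} [MetricSpace X] (F : Set (X × X)) : Prop :=
  ∀ ε : ℝ, 0 < ε → ∃ N : ℕ, 0 < N ∧
    ∀ (n : ℕ), 1 ≤ n → ∀ (x : ℕ → X) (ℓ m : ℕ → ℕ),
      (∀ i, i + 1 < n → N ≤ m i) →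
      ∃ y : X, ∀ i, i < n → ∀ j, j ≤ ℓ i →
        setDist (relIter F ((∑ t ∈ Finset.range i, (ℓ t + m t)) + j) y)
          (relIter F j (x i)) ≤ ε

/-- The Hausdorff initial specification property (`HISP`) for a CR-dynamical
system `(X, F)`. -/
def CRHInitSpec {X : Type*} [MetricSpace X] (F : Set (X × X)) : Prop :=
  ∀ ε : ℝ, 0 < ε → ∃ N : ℕ, 0 < N ∧
    ∀ (n : ℕ), 1 ≤ n → ∀ (x : ℕ → X) (ℓ m : ℕ → ℕ),
      (∀ i, i + 1 < n → N ≤ m i) →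
      ∃ y : X, ∀ i, i < n → ∀ j, j ≤ ℓ i →
        Metric.hausdorffDist
          (relIter F ((∑ t ∈ Finset.range i, (ℓ t + m t)) + j) y)
          (relIter F j (x i)) ≤ ε

/-- The closed relation
`F = ([0,1/2] × {0}) ∪ ({0} × [0,1/2]) ∪ ([1/2,1] × {1}) ∪ ({1} × [1/2,1])`
on `X = [0,1]`. -/
def exampleRel2 : Set (Set.Icc (0 : ℝ) 1 × Set.Icc (0 : ℝ) 1) :=
  {p | (p.1.1 ≤ 1 / 2 ∧ p.2.1 = 0) ∨ (p.1.1 = 0 ∧ p.2.1 ≤ 1 / 2) ∨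
       (1 / 2 ≤ p.1.1 ∧ p.2.1 = 1) ∨ (p.1.1 = 1 ∧ 1 / 2 ≤ p.2.1)}

namespace ExampleRel2Aux

abbrev I := Set.Icc (0 : ℝ) 1

noncomputable def p0 : I := ⟨0, by norm_num⟩
noncomputable def ph : I := ⟨1/2, by norm_num⟩
noncomputable def p1 : I := ⟨1, by norm_num⟩

lemma mem_rel (z y : I) :
    (z, y) ∈ exampleRel2 ↔
      (z.1 ≤ 1/2 ∧ y.1 = 0) ∨ (z.1 = 0 ∧ y.1 ≤ 1/2) ∨
      (1/2 ≤ z.1 ∧ y.1 = 1) ∨ (z.1 = 1 ∧ 1/2 ≤ y.1) := Iff.rfl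

lemma mem_succ {X : Type*} (F : Set (X × X)) (n : ℕ) (x y : X) :
    y ∈ relIter F (n+1) x ↔ ∃ z ∈ relIter F n x, (z, y) ∈ F := Iff.rfl

lemma relIter_add {X : Type*} (F : Set (X × X)) (m n : ℕ) (x : X) (y : X) :
    y ∈ relIter F (m + n) x ↔ ∃ z ∈ relIter F m x, y ∈ relIter F n z := by
  induction n generalizing y with
  | zero =>
    constructor
    · intro h; exact ⟨y, h, rfl⟩
    · rintro ⟨z, hz, rfl⟩; exact hz
  | succ n ih =>
    constructor
    · rintro ⟨z, hz, hzy⟩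
      obtain ⟨w, hw, hwz⟩ := (ih z).1 hz
      exact ⟨w, hw, z, hwz, hzy⟩
    · rintro ⟨w, hw, z, hz, hzy⟩
      exact ⟨z, (ih z).2 ⟨w, hw, hz⟩, hzy⟩

lemma e00 : (p0, p0) ∈ exampleRel2 := Or.inl ⟨by norm_num [p0], rfl⟩
lemma e0h : (p0, ph) ∈ exampleRel2 := Or.inr (Or.inl ⟨rfl, by norm_num [ph]⟩)
lemma eh1 : (ph, p1) ∈ exampleRel2 := Or.inr (Or.inr (Or.inl ⟨by norm_num [ph], rfl⟩))
lemma e11 : (p1, p1) ∈ exampleRel2 := Or.inr (Or.inr (Or.inl ⟨by norm_num [p1], rfl⟩))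
lemma e1h : (p1, ph) ∈ exampleRel2 := Or.inr (Or.inr (Or.inr ⟨rfl, by norm_num [ph]⟩))
lemma eh0 : (ph, p0) ∈ exampleRel2 := Or.inl ⟨by norm_num [ph], rfl⟩

lemma iter3_p0 : relIter exampleRel2 3 p0 = Set.univ := by
  ext y
  simp only [Set.mem_univ, iff_true]
  rcases le_total y.1 (1/2) with hy | hy
  · exact ⟨p0, ⟨p0, ⟨p0, rfl, e00⟩, e00⟩, Or.inr (Or.inl ⟨rfl, hy⟩)⟩
  · exact ⟨p1, ⟨ph, ⟨p0, rfl, e0h⟩, eh1⟩, Or.inr (Or.inr (Or.inr ⟨rfl, hy⟩))⟩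

lemma iter3_p1 : relIter exampleRel2 3 p1 = Set.univ := by
  ext y
  simp only [Set.mem_univ, iff_true]
  rcases le_total y.1 (1/2) with hy | hy
  · exact ⟨p0, ⟨ph, ⟨p1, rfl, e1h⟩, eh0⟩, Or.inr (Or.inl ⟨rfl, hy⟩)⟩
  · exact ⟨p1, ⟨p1, ⟨p1, rfl, e11⟩, e11⟩, Or.inr (Or.inr (Or.inr ⟨rfl, hy⟩))⟩

lemma iter4 (x : I) : relIter exampleRel2 4 x = Set.univ := by
  ext y
  simp only [Set.mem_univ, iff_true]
  rcases le_total x.1 (1/2) with hx | hx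
  · refine (relIter_add exampleRel2 1 3 x y).2 ⟨p0, ⟨x, rfl, Or.inl ⟨hx, rfl⟩⟩, ?_⟩
    rw [iter3_p0]; trivial
  · refine (relIter_add exampleRel2 1 3 x y).2
      ⟨p1, ⟨x, rfl, Or.inr (Or.inr (Or.inl ⟨hx, rfl⟩))⟩, ?_⟩
    rw [iter3_p1]; trivial

lemma surj (y : I) : ∃ z : I, (z, y) ∈ exampleRel2 := by
  rcases le_total y.1 (1/2) with hy | hy
  · exact ⟨p0, Or.inr (Or.inl ⟨rfl, hy⟩)⟩
  · exact ⟨p1, Or.inr (Or.inr (Or.inr ⟨rfl, hy⟩))⟩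

lemma iter_ge4 (x : I) (j : ℕ) (hj : 4 ≤ j) :
    relIter exampleRel2 j x = Set.univ := by
  obtain ⟨k, rfl⟩ : ∃ k, j = 4 + k := ⟨j - 4, by omega⟩
  induction k with
  | zero => exact iter4 x
  | succ k ih =>
    ext y
    simp only [Set.mem_univ, iff_true]
    obtain ⟨z, hz⟩ := surj y
    refine (mem_succ exampleRel2 (4 + k) x y).2 ⟨z, ?_, hz⟩
    rw [ih (by omega)]; trivial

lemma hsp : CRHSpec exampleRel2 := by
  intro ε hε
  refine ⟨4, by norm_num, ?_⟩
  intro n x k ℓ hkl hgap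
  refine ⟨x 0, ?_⟩
  intro i hi j hkj hjl
  rcases Nat.eq_zero_or_pos i with rfl | hi0
  · rw [Metric.hausdorffDist_self_zero]; exact hε.le
  · have hgi := hgap (i - 1) (by omega)
    have hii : i - 1 + 1 = i := Nat.succ_pred_eq_of_pos hi0
    rw [hii] at hgi
    have h4 : 4 ≤ j := by omega
    rw [iter_ge4 _ j h4, iter_ge4 _ j h4, Metric.hausdorffDist_self_zero]
    exact hε.le

lemma not_hisp : ¬ CRHInitSpec exampleRel2 := by
  intro h
  obtain ⟨N, hN, hspec⟩ := h (1/4) (by norm_num)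
  obtain ⟨y, hy⟩ := hspec 2 (by norm_num) (fun _ => p0) (fun _ => 0) (fun _ => N + 4)
    (fun i _ => Nat.le_add_right _ _)
  have h1 := hy 1 (by norm_num) 0 (Nat.le_refl 0)
  simp only [Finset.sum_range_one, Nat.zero_add, Nat.add_zero] at h1
  rw [iter_ge4 y (N + 4) (by omega)] at h1
  have h0 : relIter exampleRel2 0 p0 = {p0} := rfl
  rw [h0] at h1
  have hmem : p1 ∈ (Set.univ : Set I) := trivial
  have hne : EMetric.hausdorffEdist (Set.univ : Set I) {p0} ≠ ⊤ := by
    apply Metric.hausdorffEdist_ne_top_of_nonempty_of_bounded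
    · exact ⟨p0, trivial⟩
    · exact ⟨p0, rfl⟩
    · exact isCompact_univ.isBounded
    · exact (isCompact_singleton).isBounded
  have hle := Metric.infDist_le_hausdorffDist_of_mem hmem hne
  have hd : Metric.infDist p1 ({p0} : Set I) = 1 := by
    rw [Metric.infDist_singleton, Subtype.dist_eq]
    simp [p0, p1]
  rw [hd] at hle
  linarith

end ExampleRel2Aux

/-- With `X = [0,1]` and
`F = ([0,1/2] × {0}) ∪ ({0} × [0,1/2]) ∪ ([1/2,1] × {1}) ∪ ({1} × [1/2,1])`:
`F⁴(x) = X` for every `x`, the CR-dynamical system `(X, F)` has the Hausdorff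
specification property (HSP) but not the Hausdorff initial specification
property (HISP). -/
theorem exampleRel2_iter_univ_crHSpec_not_crHInitSpec :
    (∀ x : Set.Icc (0 : ℝ) 1, relIter exampleRel2 4 x = Set.univ) ∧
      CRHSpec exampleRel2 ∧ ¬ CRHInitSpec exampleRel2 := by
  exact ⟨ExampleRel2Aux.iter4, ExampleRel2Aux.hsp, ExampleRel2Aux.not_hisp⟩
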